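/- Under a D-homothetic deformation η' = βη, ξ' = (1/β)ξ, φ' = φ, g' = γg + (β² - γ)η⊗η of an almost α-cosymplectic structure (with γ > 0 constant and β a nowhere-zero function with dβ ∧ η = 0), one has dη' = 0 and dΦ' = 2(α/β) η' ∧ Φ', so the deformed structure is almost (α/β)-cosymplectic. -/
import Mathlib


open scoped BigOperators

/-- An algebraic (Koszul-style) model of an almost `α`-cosymplectic manifold
`(M^{2n+1}, φ, ξ, η, g)`: `C` plays the role of the ring of smooth functions
and `V` the `C`-module of vector fields.  The axioms encode: `g` a symmetric
nondegenerate metric, the almost contact metric conditions, the Levi-Civita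
connection (torsion-free, metric), `h = (1/2) L_ξ φ`, the closedness of `η`
(`dη = 0`) and the structure equation `dΦ = 2α η ∧ Φ` for the fundamental
`2`-form `Φ(X,Y) = g(φX, Y)`, where `α` is a constant. -/
structure AACManifold (C : Type) [CommRing C] (V : Type) [AddCommGroup V]
    [Module C V] where
  bracket : V → V → V
  act : V → C → C
  g : V → V → C
  nabla : V → V → V
  phi : V → V
  h : V → V
  xi : V
  eta : V → C
  alpha : C
  alpha_const : ∀ X, act X alpha = 0
  g_symm : ∀ X Y, g X Y = g Y X
  g_addL : ∀ X Y Z, g (X + Y) Z = g X Z + g Y Z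
  g_smulL : ∀ (f : C) (X Y : V), g (f • X) Y = f * g X Y
  g_nondeg : ∀ X, (∀ Y, g X Y = 0) → X = 0
  phi_add : ∀ X Y, phi (X + Y) = phi X + phi Y
  phi_smul : ∀ (f : C) (X : V), phi (f • X) = f • phi X
  h_add : ∀ X Y, h (X + Y) = h X + h Y
  h_smul : ∀ (f : C) (X : V), h (f • X) = f • h X
  eta_def : ∀ X, eta X = g X xi
  phi_phi : ∀ X, phi (phi X) = -X + eta X • xi
  eta_xi : eta xi = 1
  compat : ∀ X Y, g (phi X) (phi Y) = g X Y - eta X * eta Y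
  act_add : ∀ (X : V) (f₁ f₂ : C), act X (f₁ + f₂) = act X f₁ + act X f₂
  act_mul : ∀ (X : V) (f₁ f₂ : C),
    act X (f₁ * f₂) = act X f₁ * f₂ + f₁ * act X f₂
  act_addV : ∀ (X Y : V) (f : C), act (X + Y) f = act X f + act Y f
  act_smulV : ∀ (c : C) (X : V) (f : C), act (c • X) f = c * act X f
  bracket_antisymm : ∀ X Y, bracket X Y = -bracket Y X
  bracket_act : ∀ X Y f,
    act (bracket X Y) f = act X (act Y f) - act Y (act X f)
  nabla_addL : ∀ X Y Z, nabla (X + Y) Z = nabla X Z + nabla Y Z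
  nabla_smulL : ∀ (f : C) (X Y : V), nabla (f • X) Y = f • nabla X Y
  nabla_addR : ∀ X Y Z : V, nabla X (Y + Z) = nabla X Y + nabla X Z
  nabla_leibniz : ∀ (X : V) (f : C) (Y : V),
    nabla X (f • Y) = act X f • Y + f • nabla X Y
  torsion_free : ∀ X Y, nabla X Y - nabla Y X = bracket X Y
  metric : ∀ X Y Z, act X (g Y Z) = g (nabla X Y) Z + g Y (nabla X Z)
  h_def : ∀ X, (2 : C) • h X = bracket xi (phi X) - phi (bracket xi X)
  d_eta : ∀ X Y, act X (eta Y) - act Y (eta X) - eta (bracket X Y) = 0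
  d_Phi : ∀ X Y Z,
    act X (g (phi Y) Z) - act Y (g (phi X) Z) + act Z (g (phi X) Y)
        - g (phi (bracket X Y)) Z + g (phi (bracket X Z)) Y
        - g (phi (bracket Y Z)) X
      = 2 * alpha * (eta X * g (phi Y) Z - eta Y * g (phi X) Z
          + eta Z * g (phi X) Y)

namespace AACManifold

variable {C : Type} [CommRing C] {V : Type} [AddCommGroup V] [Module C V]

/-- The Riemann curvature tensor `R(X,Y)Z`. -/
def curv (A : AACManifold C V) (X Y Z : V) : V :=
  A.nabla X (A.nabla Y Z) - A.nabla Y (A.nabla X Z) - A.nabla (A.bracket X Y) Z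

/-- The Jacobi operator `l = R(·,ξ)ξ`. -/
def jacobi (A : AACManifold C V) (X : V) : V := A.curv X A.xi A.xi

/-- The covariant derivative of a `(1,1)`-tensor field: `(∇_X T)Y`. -/
def nablaT (A : AACManifold C V) (T : V → V) (X Y : V) : V :=
  A.nabla X (T Y) - T (A.nabla X Y)

/-- The `(κ,μ,ν)`-nullity curvature condition
`R(X,Y)ξ = η(Y)(κI + μh + νφh)X - η(X)(κI + μh + νφh)Y`. -/
def KMNSpace (A : AACManifold C V) (κ μ ν : C) : Prop :=
  ∀ X Y, A.curv X Y A.xi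
    = A.eta Y • (κ • X + μ • A.h X + ν • A.phi (A.h X))
      - A.eta X • (κ • Y + μ • A.h Y + ν • A.phi (A.h Y))

/-- `df ∧ η = 0`, i.e. `f` belongs to the subring `R_η(M)`. -/
def RηMem (A : AACManifold C V) (f : C) : Prop :=
  ∀ X Y, A.act X f * A.eta Y - A.act Y f * A.eta X = 0

end AACManifold

section AuxStmt8
variable {C : Type} [CommRing C] {V : Type} [AddCommGroup V] [Module C V]
  (A : AACManifold C V)

lemma stmt8_g_zeroL (W : V) : A.g 0 W = 0 := by
  rw [← zero_smul C (0 : V), A.g_smulL, zero_mul]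

lemma stmt8_phi_zero : A.phi 0 = 0 := by
  have h := A.phi_smul 0 (0 : V)
  rw [zero_smul, zero_smul] at h
  exact h

lemma stmt8_phi_neg (U : V) : A.phi (-U) = -A.phi U := by
  rw [← neg_one_smul C U, A.phi_smul, neg_one_smul]

lemma stmt8_phi_sub (U W : V) : A.phi (U - W) = A.phi U - A.phi W := by
  rw [sub_eq_add_neg, A.phi_add, stmt8_phi_neg, ← sub_eq_add_neg]

lemma stmt8_eta_smul (f : C) (X : V) : A.eta (f • X) = f * A.eta X := by
  rw [A.eta_def, A.g_smulL, ← A.eta_def]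

lemma stmt8_eta_add (X Y : V) : A.eta (X + Y) = A.eta X + A.eta Y := by
  rw [A.eta_def, A.g_addL, ← A.eta_def, ← A.eta_def]

lemma stmt8_eta_neg (X : V) : A.eta (-X) = -A.eta X := by
  rw [← neg_one_smul C X, stmt8_eta_smul]; ring

lemma stmt8_eta_sub (X Y : V) : A.eta (X - Y) = A.eta X - A.eta Y := by
  rw [sub_eq_add_neg, stmt8_eta_add, stmt8_eta_neg]; ring

lemma stmt8_g_smulR (f : C) (X Y : V) : A.g X (f • Y) = f * A.g X Y := by
  rw [A.g_symm, A.g_smulL, A.g_symm Y X]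

lemma stmt8_g_eta (W : V) : A.g W A.xi = A.eta W := (A.eta_def W).symm

lemma stmt8_act_zero (X : V) : A.act X 0 = 0 := by
  have h := A.act_mul X 0 0; simpa using h

lemma stmt8_act_neg (X : V) (f : C) : A.act X (-f) = -A.act X f := by
  have h := A.act_add X f (-f)
  rw [add_neg_cancel, stmt8_act_zero] at h
  linear_combination -h

lemma stmt8_act_sub (X : V) (f g : C) :
    A.act X (f - g) = A.act X f - A.act X g := by
  rw [sub_eq_add_neg, A.act_add, stmt8_act_neg]; ring

lemma stmt8_phi_phi_xi : A.phi (A.phi A.xi) = 0 := by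
  rw [A.phi_phi, A.eta_xi, one_smul]; exact neg_add_cancel _

lemma stmt8_g_phixi (Y : V) :
    A.g (A.phi A.xi) Y = A.eta (A.phi A.xi) * A.eta Y := by
  have h := A.compat (A.phi A.xi) Y
  rw [stmt8_phi_phi_xi, stmt8_g_zeroL] at h
  linear_combination -h

lemma stmt8_eta_phi (U : V) :
    A.eta (A.phi U) = A.eta (A.phi A.xi) * A.eta U := by
  have h1 := A.phi_phi (A.phi U)
  have h2 := congrArg A.phi (A.phi_phi U)
  rw [h1, A.phi_add, stmt8_phi_neg, A.phi_smul] at h2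
  have h3 := add_left_cancel h2
  have h4 := congrArg A.eta h3
  rw [stmt8_eta_smul, stmt8_eta_smul, A.eta_xi, mul_one] at h4
  linear_combination h4

lemma stmt8_br_xx : A.bracket A.xi A.xi = 0 := by
  have h := A.torsion_free A.xi A.xi
  rw [sub_self] at h; exact h.symm

lemma stmt8_br_xi_smul (f : C) :
    A.bracket A.xi (f • A.xi) = A.act A.xi f • A.xi := by
  have h := A.torsion_free A.xi (f • A.xi)
  rw [A.nabla_leibniz, A.nabla_smulL] at h
  rw [← h]; abel

lemma stmt8_br_smul_left (f : C) (Z : V) :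
    A.bracket (f • A.xi) Z = f • A.bracket A.xi Z - A.act Z f • A.xi := by
  have h := A.torsion_free (f • A.xi) Z
  rw [A.nabla_smulL, A.nabla_leibniz] at h
  rw [← h, ← A.torsion_free, smul_sub]; abel

lemma stmt8_actc (U : V) :
    A.act U (A.eta (A.phi A.xi))
      = 2 * A.alpha * (A.eta (A.phi A.xi) * A.eta U) := by
  have h := A.d_Phi A.xi A.xi U
  simp only [stmt8_br_xx, stmt8_phi_zero, stmt8_g_zeroL, stmt8_g_phixi,
    A.eta_xi, mul_one, one_mul] at h
  linear_combination h

lemma stmt8_KL (Z : V) (f : C) :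
    2 * A.eta (A.phi A.xi) * A.act Z f = 0 := by
  obtain ⟨c, hc, ephi⟩ :
      ∃ c, A.eta (A.phi A.xi) = c ∧ ∀ U, A.eta (A.phi U) = c * A.eta U :=
    ⟨_, rfl, stmt8_eta_phi A⟩
  rw [hc]
  have h1 := A.d_Phi A.xi (f • A.xi) Z
  simp only [stmt8_br_xi_smul, stmt8_br_smul_left, stmt8_phi_sub, A.phi_smul,
    stmt8_g_smulR, A.g_smulL, A.act_smulV, stmt8_g_phixi, hc, stmt8_g_eta, ephi,
    stmt8_eta_sub, stmt8_eta_smul, A.eta_xi, mul_one, one_mul] at h1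
  have h2 : A.act Z c = 2 * A.alpha * (c * A.eta Z) := by
    rw [← hc]; exact stmt8_actc A Z
  have h3 := A.act_mul A.xi f (c * A.eta Z)
  have h4 := A.act_mul Z f c
  linear_combination h1 - h3 - h4 - f * h2

end AuxStmt8

/-- Under the `D`-homothetic deformation `η' = βη`, `ξ' = ξ/β`, `φ' = φ`,
`g' = γg + (β² - γ)η⊗η` (with `γ > 0` constant and `β` nowhere zero with
`dβ ∧ η = 0`) of an almost `α`-cosymplectic structure, one has `dη' = 0` and
`dΦ' = 2(α/β) η' ∧ Φ'`, so the deformed structure is almost `(α/β)`-cosymplectic. -/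
theorem stmt8 {C : Type} [CommRing C] [PartialOrder C] {V : Type}
    [AddCommGroup V] [Module C V]
    (A : AACManifold C V) (β βinv γ : C)
    (hβ : β * βinv = 1)
    (hγpos : 0 < γ) (hγconst : ∀ X : V, A.act X γ = 0)
    (hβη : ∀ X Y : V, A.act X β * A.eta Y - A.act Y β * A.eta X = 0) :
    (∀ X Y : V,
      A.act X (β * A.eta Y) - A.act Y (β * A.eta X)
        - β * A.eta (A.bracket X Y) = 0)
    ∧ (∀ X Y Z : V,
      (fun (Φ' : V → V → C) (η' : V → C) =>
        A.act X (Φ' Y Z) - A.act Y (Φ' X Z) + A.act Z (Φ' X Y)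
            - Φ' (A.bracket X Y) Z + Φ' (A.bracket X Z) Y
            - Φ' (A.bracket Y Z) X
          = 2 * (A.alpha * βinv)
              * (η' X * Φ' Y Z - η' Y * Φ' X Z + η' Z * Φ' X Y))
      (fun U W => γ * A.g (A.phi U) W
        + (β * β - γ) * A.eta (A.phi U) * A.eta W)
      (fun U => β * A.eta U)) := by
  obtain ⟨c, hc, ephi⟩ :
      ∃ c, A.eta (A.phi A.xi) = c ∧ ∀ U, A.eta (A.phi U) = c * A.eta U :=
    ⟨_, rfl, stmt8_eta_phi A⟩
  have hKL : ∀ (U : V) (f : C), 2 * c * A.act U f = 0 := by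
    intro U f; rw [← hc]; exact stmt8_KL A U f
  have hactc : ∀ U : V, A.act U c = 2 * A.alpha * (c * A.eta U) := by
    intro U; rw [← hc]; exact stmt8_actc A U
  constructor
  · intro X Y
    linear_combination A.act_mul X β (A.eta Y) - A.act_mul Y β (A.eta X)
      + β * A.d_eta X Y + hβη X Y
  · intro X Y Z
    simp only [ephi, A.act_add, A.act_mul, stmt8_act_sub, hγconst, hactc]
    linear_combination γ * A.d_Phi X Y Z
      - 2 * A.alpha * (γ * (A.eta X * A.g (A.phi Y) Z
          - A.eta Y * A.g (A.phi X) Z + A.eta Z * A.g (A.phi X) Y)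
        + (β * β - γ) * c * (A.eta X * A.eta Y * A.eta Z)) * hβ
      + (β * β - γ) * c * A.eta Z * A.d_eta X Y
      - (β * β - γ) * c * A.eta Y * A.d_eta X Z
      + (β * β - γ) * c * A.eta X * A.d_eta Y Z
      + β * A.eta Y * A.eta Z * hKL X β
      - β * A.eta X * A.eta Z * hKL Y β
      + β * A.eta X * A.eta Y * hKL Z β
      + (β * β - γ) * A.eta Y * hKL X (A.eta Z)
      - (β * β - γ) * A.eta X * hKL Y (A.eta Z)
      + (β * β - γ) * A.eta X * hKL Z (A.eta Y)
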